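/- Let y be a positive integer and m ≥ 1 an integer with 2^m dividing y, and let n be an integer with 2n > m. If t(y) ≡ 1 (mod 6) then S_{3,0}([y, y + 2^m)) = S_{3,0}([2^{2n}, 2^{2n} + 2^m)), and if t(y) ≡ 4 (mod 6) then S_{3,0}([y, y + 2^m)) = −S_{3,0}([2^{2n}, 2^{2n} + 2^m)). -/

import Mathlib

/-- binary digit sum -/
def sigma2 (n : ℕ) : ℕ := (Nat.digits 2 n).sum

/-- `S m l x = Σ_{0 ≤ n < x, n ≡ l (mod m)} (−1)^{σ(n)}` -/
def S (m l x : ℕ) : ℤ :=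
  ∑ n ∈ (Finset.range x).filter (fun n => n % m = l), (-1 : ℤ) ^ sigma2 n

/-- `Sint m l x y = S_{m,l}([x,y)) = S_{m,l}(y) − S_{m,l}(x)` -/
def Sint (m l x y : ℕ) : ℤ := S m l y - S m l x

/-- `t y = Σ (−1)^{k}` over the exponents `k` in the binary expansion of `y` -/
def t (y : ℕ) : ℤ := ∑ i ∈ Finset.range y, if y.testBit i then (-1 : ℤ) ^ i else 0

/-!
Since `2 ^ k ≡ (-1) ^ k` mod 3, `t y ≡ y` mod 3, and `t y ≡ σ y` mod 2; so `t y ≡ 1` or `4`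
mod 6 means `y ≡ 1 ≡ 2 ^ (2n)` mod 3 with `σ y` odd or even. When `2 ^ m ∣ y` and `j < 2 ^ m`
there are no carries in `y + j`, so `σ (y + j) = σ y + σ j` and
`(-1) ^ σ y · S_{3,0}([y, y + 2 ^ m))` depends only on `y` mod 3; and `σ (2 ^ (2n)) = 1`.
-/

open Finset

lemma sigma2_two_pow_mul_add (c : ℕ) {m j : ℕ} (hj : j < 2 ^ m) :
    sigma2 (2 ^ m * c + j) = sigma2 c + sigma2 j := by
  rcases Nat.eq_zero_or_pos c with rfl | hc
  · simp [sigma2]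
  have hlen : (Nat.digits 2 j).length ≤ m := (Nat.digits_length_le_iff one_lt_two j).2 hj
  have hdigits := Nat.digits_append_zeroes_append_digits (b := 2) (k := m - (Nat.digits 2 j).length)
    (n := j) one_lt_two hc
  rw [Nat.add_sub_cancel' hlen, add_comm] at hdigits
  rw [sigma2, ← hdigits]
  simp [List.sum_append, List.sum_replicate, sigma2, add_comm]

lemma sigma2_two_pow_mul (m c : ℕ) : sigma2 (2 ^ m * c) = sigma2 c := by
  simpa [sigma2] using sigma2_two_pow_mul_add c (Nat.two_pow_pos m)

lemma sigma2_two_pow (m : ℕ) : sigma2 (2 ^ m) = 1 := by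
  simpa [sigma2] using sigma2_two_pow_mul m 1

lemma t_eq_sum_range {y k : ℕ} (hy : y < 2 ^ k) :
    t y = ∑ i ∈ range k, if y.testBit i then (-1 : ℤ) ^ i else 0 := by
  have hzero {K : ℕ} (hK : y < 2 ^ K) (i : ℕ) (hi : i ∉ range K) :
      (if y.testBit i then (-1 : ℤ) ^ i else 0) = 0 := by
    rw [Nat.testBit_lt_two_pow (hK.trans_le (Nat.pow_le_pow_right two_pos (by simpa using hi)))]
    rfl
  rw [t, sum_subset (range_subset_range.2 (le_max_left y k))
      (fun i _ => hzero y.lt_two_pow_self i),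
    sum_subset (range_subset_range.2 (le_max_right y k)) (fun i _ => hzero hy i)]

lemma t_two_pow_mul_add (c : ℕ) {m j : ℕ} (hj : j < 2 ^ m) :
    t (2 ^ m * c + j) = (-1) ^ m * t c + t j := by
  have hlt : 2 ^ m * c + j < 2 ^ (m + c) := by
    rw [pow_add]
    nlinarith [c.lt_two_pow_self]
  rw [t_eq_sum_range hlt, sum_range_add, t_eq_sum_range hj, t_eq_sum_range c.lt_two_pow_self,
    mul_sum, add_comm]
  congr 1
  · refine sum_congr rfl fun i _ => ?_
    simp [Nat.testBit_two_pow_mul_add c hj, pow_add]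
  · refine sum_congr rfl fun i hi => ?_
    simp [Nat.testBit_two_pow_mul_add c hj, mem_range.1 hi]

lemma t_two_mul (n : ℕ) : t (2 * n) = -t n := by
  simpa [t] using t_two_pow_mul_add n (m := 1) (j := 0) (by norm_num)

lemma t_two_mul_add_one (n : ℕ) : t (2 * n + 1) = -t n + 1 := by
  simpa [t] using t_two_pow_mul_add n (m := 1) (j := 1) (by norm_num)

lemma sigma2_two_mul (n : ℕ) : sigma2 (2 * n) = sigma2 n := by
  simpa using sigma2_two_pow_mul 1 n

lemma sigma2_two_mul_add_one (n : ℕ) : sigma2 (2 * n + 1) = sigma2 n + 1 := by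
  simpa [sigma2] using sigma2_two_pow_mul_add n (m := 1) (j := 1) (by norm_num)

lemma t_modEq_three (y : ℕ) : t y ≡ y [ZMOD 3] := by
  induction y using Nat.evenOddRec with
  | h0 => rfl
  | h_even n ih =>
    rw [t_two_mul]
    push_cast
    exact ih.neg.trans (by unfold Int.ModEq; omega)
  | h_odd n ih =>
    rw [t_two_mul_add_one]
    push_cast
    exact (ih.neg.add_right 1).trans (by unfold Int.ModEq; omega)

lemma t_modEq_sigma2 (y : ℕ) : t y ≡ sigma2 y [ZMOD 2] := by
  induction y using Nat.evenOddRec with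
  | h0 => rfl
  | h_even n ih =>
    rw [t_two_mul, sigma2_two_mul]
    exact ih.neg.trans (by unfold Int.ModEq; omega)
  | h_odd n ih =>
    rw [t_two_mul_add_one, sigma2_two_mul_add_one]
    push_cast
    exact (ih.neg.add_right 1).trans (by unfold Int.ModEq; omega)

lemma neg_one_pow_sigma2_mul_Sint_dyadic (q l : ℕ) {m y : ℕ} (hy : 2 ^ m ∣ y) :
    (-1) ^ sigma2 y * Sint q l y (y + 2 ^ m) =
      ∑ j ∈ range (2 ^ m), if (y + j) % q = l then (-1 : ℤ) ^ sigma2 j else 0 := by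
  obtain ⟨c, rfl⟩ := hy
  rw [Sint, S, S, sum_filter, sum_filter,
    ← sum_Ico_eq_sub _ (Nat.le_add_right _ _), sum_Ico_eq_sum_range, Nat.add_sub_cancel_left,
    mul_sum]
  refine sum_congr rfl fun j hj => ?_
  rw [sigma2_two_pow_mul_add c (mem_range.1 hj), sigma2_two_pow_mul]
  split_ifs
  · rw [pow_add, ← mul_assoc, ← pow_add, Even.neg_one_pow ⟨_, rfl⟩, one_mul]
  · rw [mul_zero]

lemma neg_one_pow_sigma2_mul_Sint_dyadic_eq {q l m x y : ℕ} (hx : 2 ^ m ∣ x) (hy : 2 ^ m ∣ y)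
    (hxy : x ≡ y [MOD q]) :
    (-1) ^ sigma2 x * Sint q l x (x + 2 ^ m) = (-1) ^ sigma2 y * Sint q l y (y + 2 ^ m) := by
  rw [neg_one_pow_sigma2_mul_Sint_dyadic q l hx, neg_one_pow_sigma2_mul_Sint_dyadic q l hy]
  refine sum_congr rfl fun j _ => ?_
  rw [(hxy.add_right j : (x + j) % q = (y + j) % q)]

theorem stmt_14_general (y m n : ℕ) (hdvd : 2 ^ m ∣ y)
    (hn : m < 2 * n) :
    (t y % 6 = 1 →
      Sint 3 0 y (y + 2 ^ m) = Sint 3 0 (2 ^ (2 * n)) (2 ^ (2 * n) + 2 ^ m)) ∧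
    (t y % 6 = 4 →
      Sint 3 0 y (y + 2 ^ m) = -Sint 3 0 (2 ^ (2 * n)) (2 ^ (2 * n) + 2 ^ m)) := by
  have ht3 : t y % 3 = y % 3 := t_modEq_three y
  have ht2 : t y % 2 = sigma2 y % 2 := t_modEq_sigma2 y
  have hblock (hy : y % 3 = 1) :
      (-1) ^ sigma2 y * Sint 3 0 y (y + 2 ^ m) = -Sint 3 0 (2 ^ (2 * n)) (2 ^ (2 * n) + 2 ^ m) := by
    have h4 : 2 ^ (2 * n) % 3 = 1 := by
      rw [pow_mul, Nat.pow_mod]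
      norm_num
    simpa [sigma2_two_pow] using neg_one_pow_sigma2_mul_Sint_dyadic_eq (l := 0) hdvd
      (pow_dvd_pow 2 hn.le) (hy.trans h4.symm)
  constructor
  · intro ht
    have hodd : Odd (sigma2 y) := Nat.odd_iff.2 (by omega)
    simpa [hodd.neg_one_pow] using hblock (by omega)
  · intro ht
    have heven : Even (sigma2 y) := Nat.even_iff.2 (by omega)
    simpa [heven.neg_one_pow] using hblock (by omega)

theorem stmt_14 (y m n : ℕ) (hy : 0 < y) (hm : 1 ≤ m) (hdvd : 2 ^ m ∣ y)
    (hn : m < 2 * n) :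
    (t y % 6 = 1 →
      Sint 3 0 y (y + 2 ^ m) = Sint 3 0 (2 ^ (2 * n)) (2 ^ (2 * n) + 2 ^ m)) ∧
    (t y % 6 = 4 →
      Sint 3 0 y (y + 2 ^ m) = -Sint 3 0 (2 ^ (2 * n)) (2 ^ (2 * n) + 2 ^ m)) :=
  stmt_14_general y m n hdvd hn
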